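/- Let k ∈ ℝ, δ > 0 and r > 0, and for each integer j ≥ 1 set x_j = (0,0,δ/j) ∈ ℝ³. Then there exist C > 0 and an integer J ≥ 1, depending only on k, δ and r, such that for all j ≥ J: ∫_{B_r(0) ∩ {x₃ < 0}} |∂_{x₃} Φ_k(x, x_j)|² dx ≥ C·j. In particular the L²-norms over the interior half-ball of the hypersingular incident fields ∇_xΦ_k(x, x_j)·ν(x₀), with ν(x₀) = e₃, grow at least like √j as the source points x_j approach the boundary point x₀ = 0. -/

import Mathlib

noncomputable section

open Real MeasureTheory Metric

/-- Euclidean space `ℝ³`. -/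
abbrev E3 := EuclideanSpace ℝ (Fin 3)

/-- The fundamental solution `Φ_k(x,y) = e^{ik|x−y|}/(4π|x−y|)` of the Helmholtz
equation in `ℝ³`. -/
def Phi (k : ℝ) (x y : E3) : ℂ :=
  Complex.exp (Complex.I * (k : ℂ) * (‖x - y‖ : ℂ)) / ((4 * Real.pi * ‖x - y‖ : ℝ) : ℂ)

/-- The exterior source points `x_j = (0,0,δ/j)`. -/
def xj (δ : ℝ) (j : ℕ) : E3 := EuclideanSpace.single (2 : Fin 3) (δ / j)

/-!
Write `Φ_k(x, y) = g(‖x - y‖)` with `g(t) = e^{ikt}/(4πt)`. Then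
`∂_{x₃}Φ_k(x, y) = g'(ρ) (x₃ - y₃)/ρ` with `ρ = ‖x - y‖`, and
`|g'(ρ)| = |ikρ - 1|/(4πρ²) ≥ 1/(4πρ²)` because `ikρ - 1` has real part `-1`;
hence `|∂_{x₃}Φ_k| ≥ |x₃ - y₃|/(4πρ³)`, whatever `k` is.
For `y = ε e₃` with `ε = δ/j ≤ r`, the ball of radius `ε/4` around `-(ε/2) e₃` lies in the
lower half-ball, and on it `|x₃ - ε| ≥ ε` and `ρ ≤ 2ε`, so the squared integrand is at least
`(32πε²)⁻²`. Its volume is of order `ε³`, so the integral is at least of order `1/ε = j/δ`.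
-/

open scoped RealInnerProductSpace

theorem hasFDerivAt_norm_sub {F : Type*} [NormedAddCommGroup F] [InnerProductSpace ℝ F]
    {x y : F} (h : x ≠ y) :
    HasFDerivAt (fun z => ‖z - y‖) (‖x - y‖⁻¹ • innerSL ℝ (x - y)) x := by
  have hsq := ((hasStrictFDerivAt_norm_sq (x - y)).hasFDerivAt.comp x
    ((hasFDerivAt_id x).sub_const y)).sqrt (by simpa [sub_eq_zero] using h)
  simp only [Function.comp_def, id, sqrt_sq (norm_nonneg _)] at hsq
  convert hsq using 1
  ext v
  simp only [ContinuousLinearMap.comp_id, smul_apply, innerSL_apply_apply, smul_eq_mul,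
    nsmul_eq_mul, Nat.cast_ofNat]
  field_simp

-- `Phi k x y` is definitionally `helmholtzRadial k ‖x - y‖`.
def helmholtzRadial (k t : ℝ) : ℂ :=
  Complex.exp (Complex.I * k * t) / ((4 * π * t : ℝ) : ℂ)

def helmholtzRadialDeriv (k t : ℝ) : ℂ :=
  Complex.exp (Complex.I * k * t) * (Complex.I * k * t - 1) / ((4 * π * t ^ 2 : ℝ) : ℂ)

theorem hasDerivAt_helmholtzRadial (k : ℝ) {t : ℝ} (ht : t ≠ 0) :
    HasDerivAt (helmholtzRadial k) (helmholtzRadialDeriv k t) t := by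
  have hexp : HasDerivAt (fun s : ℝ => Complex.exp (Complex.I * k * s))
      (Complex.exp (Complex.I * k * t) * (Complex.I * k)) t := by
    simpa using ((hasDerivAt_id t).ofReal_comp.const_mul (Complex.I * k)).cexp
  have hden : HasDerivAt (fun s : ℝ => ((4 * π * s : ℝ) : ℂ)) ((4 * π : ℝ) : ℂ) t := by
    simpa using ((hasDerivAt_id t).const_mul (4 * π)).ofReal_comp
  refine (hexp.div hden (by simp [ht, pi_ne_zero])).congr_deriv ?_
  simp only [helmholtzRadialDeriv]
  push_cast
  field_simp

theorem contDiffAt_helmholtzRadial (k : ℝ) {t : ℝ} (ht : t ≠ 0) {n : WithTop ℕ∞} :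
    ContDiffAt ℝ n (helmholtzRadial k) t := by
  have hofReal : ContDiff ℝ n (fun s : ℝ => (s : ℂ)) := Complex.ofRealCLM.contDiff
  have hden : ((4 * π * t : ℝ) : ℂ) ≠ 0 := by simp [ht, pi_ne_zero]
  exact (contDiffAt_const.mul hofReal.contDiffAt).cexp.mul
    ((hofReal.contDiffAt.comp t (contDiffAt_const.mul contDiffAt_id)).inv hden)

theorem inv_le_norm_helmholtzRadialDeriv (k : ℝ) {t : ℝ} (ht : 0 < t) :
    (4 * π * t ^ 2)⁻¹ ≤ ‖helmholtzRadialDeriv k t‖ := by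
  have hre : (Complex.I * k * t - 1).re = -1 := by simp
  have hone : 1 ≤ ‖Complex.I * k * t - 1‖ := by
    simpa [hre] using Complex.abs_re_le_norm (Complex.I * k * t - 1)
  have hexp : ‖Complex.exp (Complex.I * k * t)‖ = 1 := by simp [Complex.norm_exp]
  rw [helmholtzRadialDeriv, norm_div, norm_mul, hexp, one_mul,
    Complex.norm_real, Real.norm_of_nonneg (by positivity), inv_eq_one_div]
  gcongr

section Phi

variable (k : ℝ) {x y : E3}

theorem hasFDerivAt_Phi (h : x ≠ y) :
    HasFDerivAt (fun z => Phi k z y)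
      ((ContinuousLinearMap.smulRight (1 : ℝ →L[ℝ] ℝ) (helmholtzRadialDeriv k ‖x - y‖)).comp
        (‖x - y‖⁻¹ • innerSL ℝ (x - y))) x := by
  have hρ : ‖x - y‖ ≠ 0 := norm_ne_zero_iff.mpr (sub_ne_zero.mpr h)
  exact (hasDerivAt_helmholtzRadial k hρ).hasFDerivAt.comp x (hasFDerivAt_norm_sub h)

theorem fderiv_Phi_apply (h : x ≠ y) (v : E3) :
    fderiv ℝ (fun z => Phi k z y) x v =
      (⟪x - y, v⟫ / ‖x - y‖) • helmholtzRadialDeriv k ‖x - y‖ := by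
  rw [(hasFDerivAt_Phi k h).fderiv]
  simp only [ContinuousLinearMap.comp_apply, smul_apply, innerSL_apply_apply, smul_eq_mul,
    ContinuousLinearMap.smulRight_apply, one_apply_eq_self, div_eq_inv_mul]

theorem abs_inner_div_le_norm_fderiv_Phi_apply (h : x ≠ y) (v : E3) :
    |⟪x - y, v⟫| / (4 * π * ‖x - y‖ ^ 3) ≤ ‖fderiv ℝ (fun z => Phi k z y) x v‖ := by
  have hρ : 0 < ‖x - y‖ := norm_pos_iff.mpr (sub_ne_zero.mpr h)
  rw [fderiv_Phi_apply k h, norm_smul, norm_div, Real.norm_eq_abs, norm_norm]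
  calc |⟪x - y, v⟫| / (4 * π * ‖x - y‖ ^ 3)
      = |⟪x - y, v⟫| / ‖x - y‖ * (4 * π * ‖x - y‖ ^ 2)⁻¹ := by field_simp
    _ ≤ |⟪x - y, v⟫| / ‖x - y‖ * ‖helmholtzRadialDeriv k ‖x - y‖‖ := by
      gcongr
      exact inv_le_norm_helmholtzRadialDeriv k hρ

theorem continuousOn_fderiv_Phi :
    ContinuousOn (fun x => fderiv ℝ (fun z => Phi k z y) x) {y}ᶜ := by
  have hsmooth : ContDiffOn ℝ 1 (fun z => Phi k z y) {y}ᶜ := fun z hz =>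
    ((contDiffAt_helmholtzRadial k (norm_ne_zero_iff.mpr (sub_ne_zero.mpr hz))).comp z
      ((contDiffAt_id.sub contDiffAt_const).norm ℝ (sub_ne_zero.mpr hz))).contDiffWithinAt
  exact hsmooth.continuousOn_fderiv_of_isOpen isOpen_compl_singleton le_rfl

theorem integrableOn_sq_norm_fderiv_Phi_apply {s : Set E3} (hs : IsCompact s) (hy : y ∉ s)
    (v : E3) : IntegrableOn (fun x => ‖fderiv ℝ (fun z => Phi k z y) x v‖ ^ 2) s :=
  ((((continuousOn_fderiv_Phi k).mono (Set.subset_compl_singleton_iff.mpr hy)).clm_apply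
    continuousOn_const).norm.pow 2).integrableOn_compact hs

end Phi

section HalfBall

open EuclideanSpace

variable (k : ℝ) {ε : ℝ}

theorem mem_closedBall_single_neg_half {x : E3} (hε : 0 < ε)
    (hx : x ∈ closedBall (single 2 (-(ε / 2))) (ε / 4)) :
    ‖x‖ ≤ 3 * ε / 4 ∧ x 2 ≤ -(ε / 4) ∧ ‖x - single 2 ε‖ ≤ 2 * ε := by
  set c : E3 := single 2 (-(ε / 2))
  have hxc : ‖x - c‖ ≤ ε / 4 := by rwa [mem_closedBall, dist_eq_norm] at hx
  have hcoord : |x 2 - c 2| ≤ ε / 4 :=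
    le_trans (by simpa using PiLp.norm_apply_le (x - c) 2) hxc
  have hc : c 2 = -(ε / 2) := by simp [c]
  have hnorm_c : ‖c‖ = ε / 2 := by simp [c, PiLp.norm_single, abs_of_pos hε]
  have hnorm_cy : ‖c - single 2 ε‖ = 3 * ε / 2 := by
    rw [← PiLp.single_sub, PiLp.norm_single, Real.norm_eq_abs, abs_of_neg (by linarith)]
    ring
  refine ⟨?_, ?_, ?_⟩
  · calc ‖x‖ = ‖(x - c) + c‖ := by rw [sub_add_cancel]
      _ ≤ ‖x - c‖ + ‖c‖ := norm_add_le _ _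
      _ ≤ 3 * ε / 4 := by linarith
  · linarith [le_abs_self (x 2 - c 2)]
  · calc ‖x - single 2 ε‖ = ‖(x - c) + (c - single 2 ε)‖ := by abel_nf
      _ ≤ ‖x - c‖ + ‖c - single 2 ε‖ := norm_add_le _ _
      _ ≤ 2 * ε := by linarith

theorem inv_le_norm_fderiv_Phi_single {x : E3} (hε : 0 < ε)
    (hx : x ∈ closedBall (single 2 (-(ε / 2))) (ε / 4)) :
    (32 * π * ε ^ 2)⁻¹ ≤ ‖fderiv ℝ (fun z => Phi k z (single 2 ε)) x (single 2 1)‖ := by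
  obtain ⟨-, hx2, hρ⟩ := mem_closedBall_single_neg_half hε hx
  have hne : x ≠ single 2 ε := fun h => by simp [h] at hx2; linarith
  have hρpos : 0 < ‖x - single 2 ε‖ := norm_pos_iff.mpr (sub_ne_zero.mpr hne)
  have hinner : ε ≤ |⟪x - single 2 ε, single 2 (1 : ℝ)⟫| := by
    rw [inner_single_right]
    simp only [PiLp.sub_apply, PiLp.single_apply, if_true, one_mul, conj_trivial]
    rw [abs_of_neg (by linarith)]
    linarith
  calc (32 * π * ε ^ 2)⁻¹ = ε / (4 * π * (2 * ε) ^ 3) := by field_simp; ring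
    _ ≤ |⟪x - single 2 ε, single 2 (1 : ℝ)⟫| / (4 * π * ‖x - single 2 ε‖ ^ 3) := by gcongr
    _ ≤ _ := abs_inner_div_le_norm_fderiv_Phi_apply k hne _

theorem div_le_integral_halfBall_sq_norm_fderiv_Phi {r : ℝ} (hε : 0 < ε) (hεr : ε ≤ r) :
    volume.real (ball (0 : E3) 1) / (65536 * π ^ 2 * ε) ≤
      ∫ x in ball (0 : E3) r ∩ {x : E3 | x 2 < 0},
        ‖fderiv ℝ (fun z => Phi k z (single 2 ε)) x (single 2 1)‖ ^ 2 := by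
  set S : Set E3 := closedBall (single 2 (-(ε / 2))) (ε / 4)
  have hSR : S ⊆ ball 0 r ∩ {x : E3 | x 2 < 0} := fun x hx => by
    obtain ⟨hnorm, hx2, -⟩ := mem_closedBall_single_neg_half hε hx
    exact ⟨mem_ball_zero_iff.mpr (by linarith), show x 2 < 0 by linarith⟩
  have hint : IntegrableOn
      (fun x => ‖fderiv ℝ (fun z => Phi k z (single 2 ε)) x (single 2 1)‖ ^ 2)
      (ball 0 r ∩ {x : E3 | x 2 < 0}) := by
    have hK : IsCompact (closedBall (0 : E3) r ∩ {x : E3 | x 2 ≤ 0}) :=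
      (isCompact_closedBall _ _).inter_right (isClosed_le (by fun_prop) continuous_const)
    have hy : single 2 ε ∉ closedBall (0 : E3) r ∩ {x : E3 | x 2 ≤ 0} := fun h => by
      have : ε ≤ 0 := by simpa using h.2
      linarith
    exact (integrableOn_sq_norm_fderiv_Phi_apply k hK hy _).mono_set
      (Set.inter_subset_inter ball_subset_closedBall fun x (hx : x 2 < 0) => hx.le)
  have hvol : volume.real S = (ε / 4) ^ 3 * volume.real (ball (0 : E3) 1) := by
    rw [Measure.addHaar_real_closedBall _ _ (by positivity), finrank_euclideanSpace_fin]
  calc volume.real (ball (0 : E3) 1) / (65536 * π ^ 2 * ε)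
      = ((32 * π * ε ^ 2)⁻¹) ^ 2 * volume.real S := by rw [hvol]; field_simp; ring
    _ ≤ ∫ x in S, ‖fderiv ℝ (fun z => Phi k z (single 2 ε)) x (single 2 1)‖ ^ 2 :=
      setIntegral_ge_of_const_le_real measurableSet_closedBall measure_closedBall_lt_top.ne
        (fun x hx => pow_le_pow_left₀ (by positivity) (inv_le_norm_fderiv_Phi_single k hε hx) 2)
        (hint.mono_set hSR)
    _ ≤ _ := setIntegral_mono_set hint (.of_forall fun _ => by positivity) hSR.eventuallyLE

end HalfBall

/-- Let `k ∈ ℝ`, `δ > 0` and `r > 0`.  Then there exist `C > 0` and an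
integer `J ≥ 1`, depending only on `k, δ, r`, such that for all `j ≥ J`:
`∫_{B_r(0) ∩ {x₃ < 0}} |∂_{x₃} Φ_k(x, x_j)|² dx ≥ C·j`.  In particular the `L²`-norms of
the hypersingular incident fields over the interior half-ball grow at least like `√j` as
the sources approach the boundary point. -/
theorem hypersingular_L2_growth (k δ r : ℝ) (hδ : 0 < δ) (hr : 0 < r) :
    ∃ C > 0, ∃ J : ℕ, 1 ≤ J ∧ ∀ j : ℕ, J ≤ j →
      C * (j : ℝ) ≤
        ∫ x in ball (0 : E3) r ∩ {x : E3 | x 2 < 0},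
          ‖fderiv ℝ (fun z => Phi k z (xj δ j)) x (EuclideanSpace.single 2 1)‖ ^ 2 := by
  have hV : 0 < volume.real (ball (0 : E3) 1) :=
    ENNReal.toReal_pos (measure_ball_pos _ _ one_pos).ne' measure_ball_lt_top.ne
  refine ⟨volume.real (ball (0 : E3) 1) / (65536 * π ^ 2 * δ), by positivity, ⌈δ / r⌉₊ + 1,
    Nat.le_add_left 1 _, fun j hj => ?_⟩
  have hj_pos : (0 : ℝ) < j := by exact_mod_cast (Nat.succ_pos _).trans_le hj
  have hδj : δ / j ≤ r := by
    rw [div_le_iff₀ hj_pos, ← div_le_iff₀' hr]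
    exact (Nat.le_ceil _).trans (by exact_mod_cast (Nat.le_succ _).trans hj)
  calc volume.real (ball (0 : E3) 1) / (65536 * π ^ 2 * δ) * j
      = volume.real (ball (0 : E3) 1) / (65536 * π ^ 2 * (δ / j)) := by field_simp
    _ ≤ _ := div_le_integral_halfBall_sq_norm_fderiv_Phi k (div_pos hδ hj_pos) hδj
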